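/- arXiv:1009.0028 — 5 statements merged into one kernel-verified Lean document; each statement's English description precedes it below -/
import Mathlib

section
/- Let N = q₁^{e₁}···q_h^{e_h} be a product of distinct prime powers. Two elements of P¹(Z/NZ) lie in the same orbit under the right action of the subgroup {(ε n; 0 ε) : ε = ±1, n ∈ Z} (reduced mod N) if and only if for every i, their images in P¹(Z/qᵢ^{eᵢ}Z) lie in the same orbit under the corresponding subgroup mod qᵢ^{eᵢ}. -/
/-- Two pairs over `ZMod n` represent points of `P¹(ZMod n)` in the same orbit under the
right action of `Γ_∞ = {(ε m; 0 ε) : ε = ±1, m ∈ ℤ}` (reduced mod `n`):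
`[x₀:x₁]·(ε m; 0 ε) = [ε x₀ : m x₀ + ε x₁]`, combined with unit scaling. -/
def cuspRel (n : ℕ) (x y : ZMod n × ZMod n) : Prop :=
  ∃ (lam : (ZMod n)ˣ) (eps : ℤˣ) (m : ℤ),
    y = ((lam : ZMod n) * (((eps : ℤ) : ZMod n) * x.1),
         (lam : ZMod n) * ((m : ZMod n) * x.1 + ((eps : ℤ) : ZMod n) * x.2))

lemma cuspRel_iff' (n : ℕ) (x y : ZMod n × ZMod n) :
    cuspRel n x y ↔
    (∃ (lam : (ZMod n)ˣ) (m : ℤ),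
      y = ((lam : ZMod n) * x.1, (lam : ZMod n) * ((m : ZMod n) * x.1 + x.2))) := by
  constructor
  · rintro ⟨lam, eps, m, rfl⟩
    rcases Int.units_eq_one_or eps with rfl | rfl
    · exact ⟨lam, m, by simp⟩
    · refine ⟨lam * (-1), -m, Prod.ext ?_ ?_⟩ <;> simp <;> ring
  · rintro ⟨lam, m, rfl⟩
    exact ⟨lam, 1, m, by simp⟩

lemma crt_bijective {S : Finset ℕ} {e : ℕ → ℕ} {N : ℕ}
    (hS : ∀ q ∈ S, Nat.Prime q) (hN : N = ∏ q ∈ S, q ^ e q) :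
    Function.Bijective (Pi.ringHom (fun i : S => ZMod.castHom
      (show (i : ℕ) ^ e (i : ℕ) ∣ N from hN ▸ Finset.dvd_prod_of_mem _ i.2)
      (ZMod ((i : ℕ) ^ e (i : ℕ))))) := by
  have hcop : Pairwise (Function.onFun Nat.Coprime fun i : S => (i : ℕ) ^ e (i : ℕ)) := by
    intro i j hij
    exact Nat.Coprime.pow _ _ ((Nat.coprime_primes (hS i i.2) (hS j j.2)).mpr
      (fun h => hij (Subtype.ext h)))
  have hNa : N = ∏ i : S, (i : ℕ) ^ e (i : ℕ) := by rw [hN, ← Finset.prod_coe_sort S (fun q => q ^ e q)]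
  have Ψ : ZMod N ≃+* ((i : S) → ZMod ((i : ℕ) ^ e (i : ℕ))) :=
    (ZMod.ringEquivCongr hNa).trans (ZMod.prodEquivPi _ hcop)
  rw [show (Pi.ringHom (fun i : S => ZMod.castHom
      (show (i : ℕ) ^ e (i : ℕ) ∣ N from hN ▸ Finset.dvd_prod_of_mem _ i.2)
      (ZMod ((i : ℕ) ^ e (i : ℕ))))) = Ψ.toRingHom from RingHom.ext_zmod _ _]
  exact Ψ.bijective

/-- Two elements of `P¹(Z/NZ)` (with `N = ∏ q^{e_q}` a product of distinct prime powers) lie in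
the same `Γ_∞`-orbit iff, for every `q`, their reductions in `P¹(Z/q^{e_q}Z)` lie in the same
`Γ_∞`-orbit. -/
theorem cuspRel_iff_forall_prime_pow (S : Finset ℕ) (e : ℕ → ℕ) (N : ℕ)
    (hS : ∀ q ∈ S, Nat.Prime q) (he : ∀ q ∈ S, 1 ≤ e q)
    (hN : N = ∏ q ∈ S, q ^ e q)
    (x y : ZMod N × ZMod N) (hx : IsCoprime x.1 x.2) (hy : IsCoprime y.1 y.2) :
    cuspRel N x y ↔
      ∀ q (hq : q ∈ S), cuspRel (q ^ e q)
        (ZMod.castHom (show q ^ e q ∣ N by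
            rw [hN]; exact Finset.dvd_prod_of_mem (fun q => q ^ e q) hq) (ZMod (q ^ e q)) x.1,
         ZMod.castHom (show q ^ e q ∣ N by
            rw [hN]; exact Finset.dvd_prod_of_mem (fun q => q ^ e q) hq) (ZMod (q ^ e q)) x.2)
        (ZMod.castHom (show q ^ e q ∣ N by
            rw [hN]; exact Finset.dvd_prod_of_mem (fun q => q ^ e q) hq) (ZMod (q ^ e q)) y.1,
         ZMod.castHom (show q ^ e q ∣ N by
            rw [hN]; exact Finset.dvd_prod_of_mem (fun q => q ^ e q) hq) (ZMod (q ^ e q)) y.2) := by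
  haveI : NeZero N := ⟨by
    rw [hN]
    exact (Finset.prod_pos fun q hq => pow_pos (hS q hq).pos _).ne'⟩
  simp only [cuspRel_iff']
  constructor
  · rintro ⟨lam, m, rfl⟩ q hq
    refine ⟨Units.map (ZMod.castHom (show q ^ e q ∣ N by
        rw [hN]; exact Finset.dvd_prod_of_mem (fun q => q ^ e q) hq)
        (ZMod (q ^ e q))).toMonoidHom lam, m, ?_⟩
    refine Prod.ext ?_ ?_ <;> simp [map_mul, map_add, map_intCast]
  · intro h
    choose lam m hlm using h
    obtain ⟨hinj, hsurj⟩ := crt_bijective hS hN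
    obtain ⟨L, hL⟩ := hsurj (fun i => (lam i i.2 : ZMod _))
    obtain ⟨M, hM⟩ := hsurj (fun i => ((m i i.2 : ℤ) : ZMod _))
    obtain ⟨L', hL'⟩ := hsurj (fun i => ((lam i i.2)⁻¹ : (ZMod _)ˣ))
    have hLunit : IsUnit L := by
      refine IsUnit.of_mul_eq_one L' (hinj ?_)
      funext i
      have h1 := congrFun hL i
      have h2 := congrFun hL' i
      simp only [Pi.ringHom, RingHom.pi_apply] at h1 h2 ⊢
      rw [map_mul, map_one, h1, h2, Units.mul_inv]
    refine ⟨hLunit.unit, (M.val : ℤ), ?_⟩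
    have key : ∀ i : S, (ZMod.castHom
        (show (i : ℕ) ^ e (i : ℕ) ∣ N from hN ▸ Finset.dvd_prod_of_mem _ i.2)
        (ZMod ((i : ℕ) ^ e (i : ℕ)))) (((M.val : ℤ) : ZMod N))
        = ((m i i.2 : ℤ) : ZMod ((i : ℕ) ^ e (i : ℕ))) := by
      intro i
      have h3 := congrFun hM i
      simp only [Pi.ringHom, RingHom.pi_apply] at h3
      rw [← h3]
      push_cast
      rw [map_natCast, ZMod.natCast_val, ZMod.castHom_apply]
    refine Prod.ext (hinj ?_) (hinj ?_)
    · funext i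
      have h1 := congrFun hL i
      have hy1 := congrArg Prod.fst (hlm i i.2)
      simp only [Pi.ringHom, RingHom.pi_apply] at h1 ⊢
      simp only [map_mul, IsUnit.unit_spec, h1]
      exact hy1
    · funext i
      have h1 := congrFun hL i
      have hy2 := congrArg Prod.snd (hlm i i.2)
      simp only [Pi.ringHom, RingHom.pi_apply] at h1 ⊢
      simp only [map_mul, map_add, IsUnit.unit_spec, h1, key i]
      exact hy2
end

section
/- Let q be a prime and e ≥ 1. Then the set consisting of the identity matrix, the matrix (0 -1; 1 0), and the matrices (1 0; c₁q^l 1) for 1 ≤ l < e, gcd(c₁,q) = 1, 1 ≤ c₁ < min(q^l, q^{e-l}), is a complete set of representatives for the double cosets Γ₀(q^e) \ SL(2,Z) / Γ_∞. -/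
open CongruenceSubgroup

namespace DoubleCosetAux
abbrev SL2 := Matrix.SpecialLinearGroup (Fin 2) ℤ
lemma coe_mul' (A B : SL2) : (A * B).1 = A.1 * B.1 := rfl
lemma mul_e10 (A B : SL2) :
    (A * B).1 1 0 = A.1 1 0 * B.1 0 0 + A.1 1 1 * B.1 1 0 := by
  rw [coe_mul', Matrix.mul_apply, Fin.sum_univ_two]
lemma mul_e11 (A B : SL2) :
    (A * B).1 1 1 = A.1 1 0 * B.1 0 1 + A.1 1 1 * B.1 1 1 := by
  rw [coe_mul', Matrix.mul_apply, Fin.sum_univ_two]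
lemma det_eq' (A : SL2) : A.1 0 0 * A.1 1 1 - A.1 0 1 * A.1 1 0 = 1 := by
  have h := A.2
  rwa [Matrix.det_fin_two] at h
lemma inv_coe (A : SL2) :
    (A⁻¹).1 = !![A.1 1 1, -A.1 0 1; -A.1 1 0, A.1 0 0] := by
  rw [Matrix.SpecialLinearGroup.SL2_inv_expl]; rfl
lemma gamma0_dvd {N : ℕ} {A : SL2} (h : A ∈ Gamma0 N) : (N:ℤ) ∣ A.1 1 0 := by
  rw [Gamma0_mem] at h
  exact (ZMod.intCast_zmod_eq_zero_iff_dvd _ _).mp h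
lemma gamma0_of_dvd {N : ℕ} {A : SL2} (h : (N:ℤ) ∣ A.1 1 0) : A ∈ Gamma0 N := by
  rw [Gamma0_mem]
  exact (ZMod.intCast_zmod_eq_zero_iff_dvd _ _).mpr h
lemma int_coprime {q : ℕ} (hq : q.Prime) {n : ℤ} (h : ¬ (q:ℤ) ∣ n) : IsCoprime (q:ℤ) n := by
  rw [Int.isCoprime_iff_gcd_eq_one]
  have h' : ¬ q ∣ n.natAbs := fun hd => h (Int.natAbs_dvd_natAbs.mp (by simpa using hd))
  exact (Nat.Prime.coprime_iff_not_dvd hq).mpr h'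
lemma min_pow (q l k : ℕ) (hq : 1 ≤ q) : min (q^l) (q^k) = q^(min l k) := by
  rcases le_total l k with h | h
  · rw [min_eq_left (Nat.pow_le_pow_right hq h), min_eq_left h]
  · rw [min_eq_right (Nat.pow_le_pow_right hq h), min_eq_right h]

lemma lower_zero_mul (A B : SL2) (hA : A.1 1 0 = 0) (hB : B.1 1 0 = 0) :
    (A * B).1 1 0 = 0 := by
  rw [mul_e10, hA, hB]; ring

lemma lower_zero_inv (A : SL2) (hA : A.1 1 0 = 0) : (A⁻¹).1 1 0 = 0 := by
  rw [inv_coe]; simp [hA]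

lemma construct (N : ℕ) (γ ρ : SL2) (n : ℤ)
    (h : (N:ℤ) ∣ γ.1 1 0 * (ρ.1 1 1 + n * ρ.1 1 0) - γ.1 1 1 * ρ.1 1 0) :
    ∃ γ₀ δ : SL2, γ₀ ∈ Gamma0 N ∧ δ.1 1 0 = 0 ∧ γ = γ₀ * ρ * δ := by
  have hδdet : Matrix.det !![(1:ℤ), n; 0, 1] = 1 := by simp [Matrix.det_fin_two]
  set δ : SL2 := ⟨!![(1:ℤ), n; 0, 1], hδdet⟩ with hδ
  refine ⟨γ * δ⁻¹ * ρ⁻¹, δ, ?_, by simp [hδ], by group⟩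
  apply gamma0_of_dvd
  have h1 : (γ * δ⁻¹).1 1 0 = γ.1 1 0 := by
    rw [mul_e10, inv_coe]; simp [hδ]
  have h2 : (γ * δ⁻¹).1 1 1 = γ.1 1 0 * (-n) + γ.1 1 1 := by
    rw [mul_e11, inv_coe]; simp [hδ]
  have h3 : (γ * δ⁻¹ * ρ⁻¹).1 1 0
      = γ.1 1 0 * (ρ.1 1 1 + n * ρ.1 1 0) - γ.1 1 1 * ρ.1 1 0 := by
    rw [mul_e10, h1, h2, inv_coe]; simp; ring
  rw [h3]; exact h

lemma extract (N : ℕ) (ρ ρ' γ₀ δ : SL2) (h₀ : γ₀ ∈ Gamma0 N) (hδ : δ.1 1 0 = 0)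
    (h : ρ' = γ₀ * ρ * δ) :
    ∃ g u n ε : ℤ, (ε = 1 ∨ ε = -1) ∧ (N:ℤ) ∣ g ∧ (∃ x y : ℤ, x*u + y*(N:ℤ) = 1) ∧
      ρ'.1 1 0 = (g * ρ.1 0 0 + u * ρ.1 1 0) * ε ∧
      ρ'.1 1 1 = (g * ρ.1 0 0 + u * ρ.1 1 0) * n + (g * ρ.1 0 1 + u * ρ.1 1 1) * ε := by
  have hδdet := det_eq' δ
  rw [hδ] at hδdet
  have hδ2 : δ.1 0 0 * δ.1 1 1 = 1 := by linarith
  have hcase : (δ.1 0 0 = 1 ∧ δ.1 1 1 = 1) ∨ (δ.1 0 0 = -1 ∧ δ.1 1 1 = -1) :=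
    Int.mul_eq_one_iff_eq_one_or_neg_one.mp hδ2
  have hgd : (N:ℤ) ∣ γ₀.1 1 0 := gamma0_dvd h₀
  obtain ⟨G, hG⟩ := hgd
  have hγdet := det_eq' γ₀
  refine ⟨γ₀.1 1 0, γ₀.1 1 1, δ.1 0 1, δ.1 0 0, ?_, ⟨G, hG⟩,
    ⟨γ₀.1 0 0, -(γ₀.1 0 1 * G), by rw [mul_comm] ; linear_combination hγdet + γ₀.1 0 1 * hG⟩, ?_, ?_⟩
  · rcases hcase with ⟨h1, _⟩ | ⟨h1, _⟩
    · exact Or.inl h1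
    · exact Or.inr h1
  · rw [h, mul_e10, mul_e10, mul_e11, hδ]; ring
  · rw [h, mul_e11, mul_e10, mul_e11]
    have h11 : δ.1 1 1 = δ.1 0 0 := by rcases hcase with ⟨h1, h2⟩ | ⟨h1, h2⟩ <;> rw [h1, h2]
    rw [h11]

def Shape (q e : ℕ) (ρ : SL2) : Prop :=
  ρ = 1 ∨ ρ.1 = !![0, -1; 1, 0] ∨
    ∃ l c₁ : ℕ, 1 ≤ l ∧ l < e ∧ Nat.gcd c₁ q = 1 ∧ 1 ≤ c₁ ∧
      c₁ < min (q ^ l) (q ^ (e - l)) ∧ ρ.1 = !![1, 0; (c₁ : ℤ) * (q : ℤ) ^ l, 1]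

lemma existence (q e : ℕ) (hq : q.Prime) (he : 1 ≤ e) (γ : SL2) :
    ∃ ρ : SL2, Shape q e ρ ∧
      ∃ γ₀ δ : SL2, γ₀ ∈ Gamma0 (q ^ e) ∧ δ.1 1 0 = 0 ∧ γ = γ₀ * ρ * δ := by
  set c := γ.1 1 0 with hc_def
  set d := γ.1 1 1 with hd_def
  have hdet := det_eq' γ
  have hq0 : (q:ℤ) ≠ 0 := by exact_mod_cast hq.pos.ne'
  have hq2 : (2:ℤ) ≤ (q:ℤ) := by exact_mod_cast hq.two_le
  have hqZ : Prime (q:ℤ) := Nat.prime_iff_prime_int.mp hq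
  have hcastN : ((q ^ e : ℕ) : ℤ) = (q:ℤ)^e := by push_cast; ring
  by_cases hc : (q:ℤ)^e ∣ c
  · refine ⟨1, Or.inl rfl, construct _ _ _ 0 ?_⟩
    simpa [hcastN, Matrix.one_apply] using hc
  by_cases hqc : (q:ℤ) ∣ c
  · -- middle case
    have hc0 : c ≠ 0 := by intro h0; exact hc (h0 ▸ dvd_zero _)
    have hna : c.natAbs ≠ 0 := Int.natAbs_ne_zero.mpr hc0
    set l := c.natAbs.factorization q with hl_def
    have hl1 : 1 ≤ l := by
      have : q ^ 1 ∣ c.natAbs := by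
        simpa using Int.natCast_dvd.mp hqc
      exact (Nat.Prime.pow_dvd_iff_le_factorization hq hna).mp this
    have hle : l < e := by
      by_contra hle
      push_neg at hle
      exact hc (by
        rw [← hcastN]
        exact_mod_cast Int.natCast_dvd.mpr
          ((Nat.Prime.pow_dvd_iff_le_factorization hq hna).mpr hle))
    set c₂ : ℤ := c.sign * (c.natAbs / q ^ l : ℕ) with hc₂_def
    have hfac : (q:ℤ)^l * c₂ = c := by
      have h1 : (q ^ l) * (c.natAbs / q ^ l) = c.natAbs := Nat.ordProj_mul_ordCompl_eq_self _ _
      have h1' : ((q:ℤ))^l * ((c.natAbs / q ^ l : ℕ) : ℤ) = (c.natAbs : ℤ) := by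
        exact_mod_cast congrArg (Nat.cast : ℕ → ℤ) h1
      have h2 : c.sign * (c.natAbs : ℤ) = c := Int.sign_mul_natAbs c
      calc (q:ℤ)^l * c₂ = c.sign * ((q:ℤ)^l * ((c.natAbs / q ^ l : ℕ) : ℤ)) := by
            rw [hc₂_def]; ring
        _ = c.sign * (c.natAbs : ℤ) := by rw [h1']
        _ = c := h2
    have hql1 : ¬ (q:ℤ)^(l+1) ∣ c := by
      intro hdvd
      exact Nat.pow_succ_factorization_not_dvd hna hq (by
        simpa using Int.natCast_dvd.mp (by exact_mod_cast hdvd))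
    have hqc₂ : ¬ (q:ℤ) ∣ c₂ := by
      intro hd
      obtain ⟨t, ht⟩ := hd
      exact hql1 ⟨t, by rw [← hfac, ht]; ring⟩
    have hqd : ¬ (q:ℤ) ∣ d := by
      intro hdvd
      have h1 : (q:ℤ) ∣ γ.1 0 0 * γ.1 1 1 - γ.1 0 1 * γ.1 1 0 :=
        dvd_sub (Dvd.dvd.mul_left hdvd _) (Dvd.dvd.mul_left hqc _)
      rw [hdet] at h1
      exact absurd (Int.le_of_dvd one_pos h1) (by linarith)
    obtain ⟨x, y, hxy⟩ : IsCoprime d ((q:ℤ)^e) := ((int_coprime hq hqd).pow_left).symm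
    set m := min l (e - l) with hm_def
    have hm1 : 1 ≤ m := by omega
    have hml : m ≤ l := min_le_left _ _
    have hmel : m ≤ e - l := min_le_right _ _
    set c₁Z : ℤ := (c₂ * x) % ((q:ℤ)^m) with hc₁Z_def
    have h0le : 0 ≤ c₁Z := Int.emod_nonneg _ (pow_ne_zero _ hq0)
    have hltZ : c₁Z < (q:ℤ)^m := Int.emod_lt_of_pos _ (by positivity)
    have hcong : (q:ℤ)^m ∣ c₂ * x - c₁Z := ⟨(c₂ * x) / ((q:ℤ)^m), by
      rw [hc₁Z_def, Int.emod_def]; ring⟩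
    have hqx : ¬ (q:ℤ) ∣ x := by
      intro hdvd
      have h1 : (q:ℤ) ∣ 1 := by
        rw [← hxy]
        exact dvd_add (hdvd.mul_right d) ((dvd_pow_self (q:ℤ) (by omega : e ≠ 0)).mul_left y)
      exact absurd (Int.le_of_dvd one_pos h1) (by linarith)
    have hqc₁ : ¬ (q:ℤ) ∣ c₁Z := by
      intro hdvd
      obtain ⟨t, ht⟩ := hcong
      have h2 : (q:ℤ) ∣ c₂ * x := by
        have hqm : (q:ℤ) ∣ (q:ℤ)^m := dvd_pow_self _ (by omega)
        have h3 : c₂ * x = c₁Z + (q:ℤ)^m * t := by linarith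
        rw [h3]
        exact dvd_add hdvd (Dvd.dvd.mul_right hqm _)
      rcases hqZ.dvd_mul.mp h2 with h | h
      · exact hqc₂ h
      · exact hqx h
    have hc₁0 : 1 ≤ c₁Z := by
      rcases lt_or_eq_of_le h0le with h | h
      · omega
      · exact absurd (h ▸ dvd_zero _) hqc₁
    set c₁ : ℕ := c₁Z.toNat with hc₁_def
    have hc₁cast : (c₁ : ℤ) = c₁Z := Int.toNat_of_nonneg h0le
    have hgcd : Nat.gcd c₁ q = 1 := by
      have hnd : ¬ q ∣ c₁ := by
        intro hdvd
        exact hqc₁ (hc₁cast ▸ Int.natCast_dvd_natCast.mpr hdvd)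
      exact Nat.coprime_comm.mp ((Nat.Prime.coprime_iff_not_dvd hq).mpr hnd)
    have hc₁1 : 1 ≤ c₁ := by omega
    have hc₁lt : c₁ < min (q ^ l) (q ^ (e - l)) := by
      rw [min_pow q l (e - l) hq.one_lt.le]
      have h1 : (c₁ : ℤ) < ((q : ℕ):ℤ)^m := hc₁cast ▸ hltZ
      exact_mod_cast h1
    have hMdet : Matrix.det !![(1:ℤ), 0; (c₁:ℤ) * (q:ℤ)^l, 1] = 1 := by
      simp [Matrix.det_fin_two]
    refine ⟨⟨_, hMdet⟩, Or.inr (Or.inr ⟨l, c₁, hl1, hle, hgcd, hc₁1, hc₁lt, rfl⟩), ?_⟩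
    obtain ⟨t, ht⟩ : (q:ℤ)^m ∣ c₂ - d * c₁Z := by
      have h1 : c₂ - d * c₁Z = d * (c₂ * x - c₁Z) + c₂ * (y * (q:ℤ)^e) := by
        linear_combination (-c₂) * hxy
      rw [h1]
      exact dvd_add (hcong.mul_left d) (((pow_dvd_pow (q:ℤ) (by omega : m ≤ e)).mul_left y).mul_left c₂)
    have e1 : (⟨!![(1:ℤ), 0; (c₁:ℤ) * (q:ℤ)^l, 1], hMdet⟩ : SL2).1 1 1 = 1 := rfl
    have e2 : (⟨!![(1:ℤ), 0; (c₁:ℤ) * (q:ℤ)^l, 1], hMdet⟩ : SL2).1 1 0 = (c₁:ℤ) * (q:ℤ)^l := rfl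
    rcases le_or_gt (e - l) l with hcase | hcase
    · -- m = e - l, take n = 0
      have hml' : m = e - l := min_eq_right hcase
      refine construct _ _ _ 0 ?_
      rw [hcastN, e1, e2, hc₁cast]
      refine ⟨t, ?_⟩
      have hsplit : (q:ℤ)^l * (q:ℤ)^m = (q:ℤ)^e := by
        rw [← pow_add]; congr 1; omega
      linear_combination (-1 : ℤ) * hfac + (q:ℤ)^l * ht + t * hsplit
    · -- m = l
      have hml' : m = l := min_eq_left (by omega)
      obtain ⟨w, z, hwz⟩ : IsCoprime (c₁Z * c₂) ((q:ℤ)^(e - 2*l)) := by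
        refine (IsCoprime.pow_left ?_).symm
        exact int_coprime hq (fun hd => (hqZ.dvd_mul.mp hd).elim hqc₁ hqc₂)
      refine construct _ _ _ (-(t * w)) ?_
      rw [hcastN, e1, e2, hc₁cast]
      refine ⟨t * z, ?_⟩
      have hsplit2 : (q:ℤ)^l * (q:ℤ)^l * (q:ℤ)^(e - 2*l) = (q:ℤ)^e := by
        rw [← pow_add, ← pow_add]; congr 1; omega
      rw [hml'] at ht
      linear_combination (-(1 + (-(t*w)) * c₁Z * (q:ℤ)^l)) * hfac + (q:ℤ)^l * ht
        + (-((q:ℤ)^l * (q:ℤ)^l * t)) * hwz + (t*z) * hsplit2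
  · -- S case
    obtain ⟨x, y, hxy⟩ : IsCoprime c ((q:ℤ)^e) := ((int_coprime hq hqc).pow_left).symm
    have hSdet : Matrix.det !![(0:ℤ), -1; 1, 0] = 1 := by simp [Matrix.det_fin_two]
    refine ⟨⟨!![(0:ℤ), -1; 1, 0], hSdet⟩, Or.inr (Or.inl rfl), construct _ _ _ (x * d) ?_⟩
    rw [hcastN]
    have e1 : (⟨!![(0:ℤ), -1; 1, 0], hSdet⟩ : SL2).1 1 1 = 0 := rfl
    have e2 : (⟨!![(0:ℤ), -1; 1, 0], hSdet⟩ : SL2).1 1 0 = 1 := rfl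
    rw [e1, e2]
    exact ⟨-(d * y), by linear_combination d * hxy⟩

lemma shape_eq (q e : ℕ) (hq : q.Prime) (he : 1 ≤ e) (ρ ρ' γ₀ δ : SL2)
    (hρ : Shape q e ρ) (hρ' : Shape q e ρ') (h₀ : γ₀ ∈ Gamma0 (q ^ e)) (hδ : δ.1 1 0 = 0)
    (h : ρ' = γ₀ * ρ * δ) : ρ' = ρ := by
  obtain ⟨g, u, n, ε, hε, hg, ⟨x, y, hxy⟩, H10, H11⟩ := extract (q ^ e) ρ ρ' γ₀ δ h₀ hδ h
  have hcastN : ((q ^ e : ℕ) : ℤ) = (q:ℤ)^e := by push_cast; ring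
  rw [hcastN] at hg hxy
  have hq0Z : (q:ℤ) ≠ 0 := by exact_mod_cast hq.pos.ne'
  have hq2 : (2:ℤ) ≤ (q:ℤ) := by exact_mod_cast hq.two_le
  have hqZ : Prime (q:ℤ) := Nat.prime_iff_prime_int.mp hq
  have hqe2 : (2:ℤ) ≤ (q:ℤ)^e := le_trans hq2 (le_self_pow₀ (by linarith) (by omega))
  obtain ⟨G, hG⟩ := hg
  have hqu : ¬ (q:ℤ) ∣ u := by
    intro hdvd
    have h1 : (q:ℤ) ∣ 1 := by
      rw [← hxy]
      exact dvd_add (hdvd.mul_left x) ((dvd_pow_self (q:ℤ) (by omega : e ≠ 0)).mul_left y)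
    exact absurd (Int.le_of_dvd one_pos h1) (by linarith)
  have hε2 : ε * ε = 1 := by rcases hε with h1 | h1 <;> rw [h1] <;> ring
  have gcd_contra : ∀ c₁ : ℕ, Nat.gcd c₁ q = 1 → (q:ℤ) ∣ (c₁:ℤ) → False := by
    intro c₁ hgcd hdvd
    have h1 : q ∣ c₁ := Int.natCast_dvd_natCast.mp hdvd
    have h2 : q ∣ 1 := hgcd ▸ Nat.dvd_gcd h1 dvd_rfl
    have h3 := Nat.le_of_dvd one_pos h2
    have := hq.two_le
    omega
  rcases hρ with hs | hs | ⟨l, c₁, hl1, hle, hgcd, hc11, hc1lt, hs⟩ <;>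
    rcases hρ' with hs' | hs' | ⟨l', c₁', hl1', hle', hgcd', hc11', hc1lt', hs'⟩
  -- case (1,1)
  · rw [hs, hs']
  -- case (1,S)
  · exfalso
    have r'10 : ρ'.1 1 0 = 1 := by rw [hs']; rfl
    have r00 : ρ.1 0 0 = 1 := by rw [hs]; rfl
    have r10 : ρ.1 1 0 = 0 := by rw [hs]; rfl
    rw [r'10, r00, r10, hG] at H10
    have hdvd : (q:ℤ)^e ∣ 1 := ⟨G * ε, by linear_combination H10⟩
    exact absurd (Int.le_of_dvd one_pos hdvd) (by linarith)
  -- case (1,M)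
  · exfalso
    have r'10 : ρ'.1 1 0 = (c₁':ℤ) * (q:ℤ)^l' := by rw [hs']; rfl
    have r00 : ρ.1 0 0 = 1 := by rw [hs]; rfl
    have r10 : ρ.1 1 0 = 0 := by rw [hs]; rfl
    rw [r'10, r00, r10, hG] at H10
    obtain ⟨K, hK⟩ : (q:ℤ)^(l'+1) ∣ (q:ℤ)^e := pow_dvd_pow _ (by omega)
    have h2 : (q:ℤ)^l' * (c₁' : ℤ) = (q:ℤ)^l' * ((q:ℤ) * (K * G * ε)) := by
      linear_combination H10 + G * ε * hK
    have h3 : (c₁' : ℤ) = (q:ℤ) * (K * G * ε) := mul_left_cancel₀ (pow_ne_zero _ hq0Z) h2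
    exact gcd_contra c₁' hgcd' ⟨K * G * ε, h3⟩
  -- case (S,1)
  · exfalso
    have r'10 : ρ'.1 1 0 = 0 := by rw [hs']; rfl
    have r00 : ρ.1 0 0 = 0 := by rw [hs]; rfl
    have r10 : ρ.1 1 0 = 1 := by rw [hs]; rfl
    rw [r'10, r00, r10] at H10
    have hu0 : u = 0 := by rcases hε with h1 | h1 <;> (rw [h1] at H10; linarith)
    exact hqu (by rw [hu0]; exact dvd_zero _)
  -- case (S,S)
  · exact Subtype.ext (by rw [hs, hs'])
  -- case (S,M)
  · exfalso
    have r'10 : ρ'.1 1 0 = (c₁':ℤ) * (q:ℤ)^l' := by rw [hs']; rfl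
    have r00 : ρ.1 0 0 = 0 := by rw [hs]; rfl
    have r10 : ρ.1 1 0 = 1 := by rw [hs]; rfl
    rw [r'10, r00, r10] at H10
    have h1 : (q:ℤ) ∣ (c₁':ℤ) * (q:ℤ)^l' := (dvd_pow_self _ (by omega : l' ≠ 0)).mul_left _
    rw [H10] at h1
    exact hqu (by rcases hε with h2 | h2 <;> simpa [h2] using h1)
  -- case (M,1)
  · exfalso
    have r'10 : ρ'.1 1 0 = 0 := by rw [hs']; rfl
    have r00 : ρ.1 0 0 = 1 := by rw [hs]; rfl
    have r10 : ρ.1 1 0 = (c₁:ℤ) * (q:ℤ)^l := by rw [hs]; rfl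
    rw [r'10, r00, r10] at H10
    have h0 : g + u * ((c₁:ℤ) * (q:ℤ)^l) = 0 := by
      rcases hε with h1 | h1 <;> (rw [h1] at H10; linarith)
    obtain ⟨K, hK⟩ : (q:ℤ)^(l+1) ∣ (q:ℤ)^e := pow_dvd_pow _ (by omega)
    have h2 : (q:ℤ)^l * (u * (c₁:ℤ)) = (q:ℤ)^l * ((q:ℤ) * (-(K * G))) := by
      linear_combination h0 - hG - G * hK
    have h3 : u * (c₁:ℤ) = (q:ℤ) * (-(K * G)) := mul_left_cancel₀ (pow_ne_zero _ hq0Z) h2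
    rcases hqZ.dvd_mul.mp ⟨-(K * G), h3⟩ with h4 | h4
    · exact hqu h4
    · exact gcd_contra c₁ hgcd h4
  -- case (M,S)
  · exfalso
    have r'10 : ρ'.1 1 0 = 1 := by rw [hs']; rfl
    have r00 : ρ.1 0 0 = 1 := by rw [hs]; rfl
    have r10 : ρ.1 1 0 = (c₁:ℤ) * (q:ℤ)^l := by rw [hs]; rfl
    rw [r'10, r00, r10] at H10
    have hqg : (q:ℤ) ∣ g := by
      rw [hG]; exact ((dvd_pow_self (q:ℤ) (by omega : e ≠ 0)).mul_right G)
    have h1 : (q:ℤ) ∣ (g * 1 + u * ((c₁:ℤ) * (q:ℤ)^l)) * ε :=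
      (dvd_add (hqg.mul_right 1)
        (((dvd_pow_self (q:ℤ) (by omega : l ≠ 0)).mul_left (c₁:ℤ)).mul_left u)).mul_right ε
    rw [← H10] at h1
    exact absurd (Int.le_of_dvd one_pos h1) (by linarith)
  -- case (M,M)
  · have r'10 : ρ'.1 1 0 = (c₁':ℤ) * (q:ℤ)^l' := by rw [hs']; rfl
    have r'11 : ρ'.1 1 1 = 1 := by rw [hs']; rfl
    have r00 : ρ.1 0 0 = 1 := by rw [hs]; rfl
    have r01 : ρ.1 0 1 = 0 := by rw [hs]; rfl
    have r10 : ρ.1 1 0 = (c₁:ℤ) * (q:ℤ)^l := by rw [hs]; rfl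
    have r11 : ρ.1 1 1 = 1 := by rw [hs]; rfl
    rw [r'10, r00, r10] at H10
    rw [r'11, r00, r10, r01, r11] at H11
    have hll : l = l' := by
      by_contra hne
      rcases Nat.lt_or_ge l l' with hlt | hge
      · -- l < l' : q ∣ u * c₁, contradiction
        have hd1 : (q:ℤ)^(l+1) ∣ (c₁':ℤ) * (q:ℤ)^l' * ε := by
          have hsp : (q:ℤ)^l' = (q:ℤ)^(l+1) * (q:ℤ)^(l'-(l+1)) := by
            rw [← pow_add]; congr 1; omega
          exact ⟨(c₁':ℤ) * (q:ℤ)^(l'-(l+1)) * ε, by rw [hsp]; ring⟩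
        have hd2 : (q:ℤ)^(l+1) ∣ g := hG ▸ (pow_dvd_pow (q:ℤ) (by omega : l+1 ≤ e)).mul_right G
        have h2 : u * ((c₁:ℤ) * (q:ℤ)^l) = (c₁':ℤ) * (q:ℤ)^l' * ε - g := by
          linear_combination (-ε) * H10 - (g * 1 + u * ((c₁:ℤ) * (q:ℤ)^l)) * hε2
        obtain ⟨K, hK⟩ : (q:ℤ)^(l+1) ∣ u * ((c₁:ℤ) * (q:ℤ)^l) := h2 ▸ dvd_sub hd1 hd2
        have h3 : (q:ℤ)^l * (u * (c₁:ℤ)) = (q:ℤ)^l * ((q:ℤ) * K) := by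
          linear_combination hK
        rcases hqZ.dvd_mul.mp ⟨K, mul_left_cancel₀ (pow_ne_zero _ hq0Z) h3⟩ with h4 | h4
        · exact hqu h4
        · exact gcd_contra c₁ hgcd h4
      · -- l' < l : q ∣ c₁'
        have hlt' : l' < l := by omega
        have hd1 : (q:ℤ)^(l'+1) ∣ g := hG ▸ (pow_dvd_pow (q:ℤ) (by omega : l'+1 ≤ e)).mul_right G
        have hd2 : (q:ℤ)^(l'+1) ∣ u * ((c₁:ℤ) * (q:ℤ)^l) := by
          have hsp : (q:ℤ)^l = (q:ℤ)^(l'+1) * (q:ℤ)^(l-(l'+1)) := by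
            rw [← pow_add]; congr 1; omega
          exact ⟨u * (c₁:ℤ) * (q:ℤ)^(l-(l'+1)), by rw [hsp]; ring⟩
        obtain ⟨K, hK⟩ : (q:ℤ)^(l'+1) ∣ (c₁':ℤ) * (q:ℤ)^l' :=
          H10 ▸ ((dvd_add (hd1.mul_right 1) hd2).mul_right ε)
        have h3 : (q:ℤ)^l' * ((c₁':ℤ)) = (q:ℤ)^l' * ((q:ℤ) * K) := by
          linear_combination hK
        exact gcd_contra c₁' hgcd' ⟨K, mul_left_cancel₀ (pow_ne_zero _ hq0Z) h3⟩
    subst hll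
    set m := min l (e - l) with hm_def
    have hml : m ≤ l := min_le_left _ _
    have hmel : m ≤ e - l := min_le_right _ _
    have hεu : (q:ℤ)^m ∣ 1 - ε * u := by
      have h3 : 1 - ε * u = (g + u * ((c₁:ℤ) * (q:ℤ)^l)) * n := by
        linear_combination H11
      rw [h3]
      refine (dvd_add (hG ▸ (pow_dvd_pow (q:ℤ) (by omega : m ≤ e)).mul_right G) ?_).mul_right n
      exact ((pow_dvd_pow (q:ℤ) hml).mul_left (c₁:ℤ)).mul_left u
    have hsp : (q:ℤ)^l * (q:ℤ)^(e-l) = (q:ℤ)^e := by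
      rw [← pow_add]; congr 1; omega
    have h4 : (q:ℤ)^l * ((c₁':ℤ) * ε - u * (c₁:ℤ)) = (q:ℤ)^l * ((q:ℤ)^(e-l) * G) := by
      linear_combination ε * H10 + (g * 1 + u * ((c₁:ℤ) * (q:ℤ)^l)) * hε2 + hG - G * hsp
    have h5 : (c₁':ℤ) * ε - u * (c₁:ℤ) = (q:ℤ)^(e-l) * G :=
      mul_left_cancel₀ (pow_ne_zero _ hq0Z) h4
    have h6 : (c₁':ℤ) - ε * u * (c₁:ℤ) = (q:ℤ)^(e-l) * (G * ε) := by
      linear_combination ε * h5 - (c₁':ℤ) * hε2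
    have h7 : (q:ℤ)^m ∣ (c₁':ℤ) - (c₁:ℤ) := by
      have heq : (c₁':ℤ) - (c₁:ℤ) =
          ((c₁':ℤ) - ε * u * (c₁:ℤ)) - (c₁:ℤ) * (1 - ε * u) := by ring
      rw [heq]
      exact dvd_sub (h6 ▸ (pow_dvd_pow (q:ℤ) hmel).mul_right (G * ε)) (hεu.mul_left (c₁:ℤ))
    have hb : (c₁:ℤ) < (q:ℤ)^m ∧ (c₁':ℤ) < (q:ℤ)^m := by
      rw [min_pow q l (e - l) hq.one_lt.le] at hc1lt hc1lt'
      constructor <;> exact_mod_cast (by assumption : _ < q ^ m)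
    have hq1Z : (1:ℤ) ≤ (c₁:ℤ) := by exact_mod_cast hc11
    have hq1Z' : (1:ℤ) ≤ (c₁':ℤ) := by exact_mod_cast hc11'
    have hzero : (c₁':ℤ) - (c₁:ℤ) = 0 := by
      by_contra hne
      have habs : (q:ℤ)^m ≤ |(c₁':ℤ) - (c₁:ℤ)| :=
        Int.le_of_dvd (abs_pos.mpr hne) ((dvd_abs _ _).mpr h7)
      have habs' : |(c₁':ℤ) - (c₁:ℤ)| < (q:ℤ)^m :=
        abs_lt.mpr ⟨by linarith [hb.1, hb.2], by linarith [hb.1, hb.2]⟩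
      linarith
    have hcc : c₁ = c₁' := by
      have : (c₁:ℤ) = (c₁':ℤ) := by linarith
      exact_mod_cast this
    exact Subtype.ext (by rw [hs, hs', hcc])

end DoubleCosetAux

open DoubleCosetAux

/-- The set `{1, (0 -1; 1 0)} ∪ {(1 0; c₁q^l 1) : 1 ≤ l < e, gcd(c₁,q)=1,
1 ≤ c₁ < min(q^l, q^{e-l})}` is a complete set of representatives for the double cosets
`Γ₀(q^e) \ SL(2,ℤ) / Γ_∞`, where `Γ_∞` consists of the matrices `(±1 n; 0 ±1)`, i.e. the
elements of `SL(2,ℤ)` whose lower-left entry vanishes. -/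
theorem double_coset_representatives (q e : ℕ) (hq : q.Prime) (he : 1 ≤ e)
    (γ : Matrix.SpecialLinearGroup (Fin 2) ℤ) :
    ∃! ρ : Matrix.SpecialLinearGroup (Fin 2) ℤ,
      (ρ = 1 ∨ ρ.1 = !![0, -1; 1, 0] ∨
        ∃ l c₁ : ℕ, 1 ≤ l ∧ l < e ∧ Nat.gcd c₁ q = 1 ∧ 1 ≤ c₁ ∧
          c₁ < min (q ^ l) (q ^ (e - l)) ∧ ρ.1 = !![1, 0; (c₁ : ℤ) * (q : ℤ) ^ l, 1]) ∧
      ∃ γ₀ δ : Matrix.SpecialLinearGroup (Fin 2) ℤ,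
        γ₀ ∈ Gamma0 (q ^ e) ∧ δ.1 1 0 = 0 ∧ γ = γ₀ * ρ * δ := by
  obtain ⟨ρ, hshape, γ₀, δ, hγ₀, hδ, hγ⟩ := existence q e hq he γ
  refine ⟨ρ, ⟨hshape, γ₀, δ, hγ₀, hδ, hγ⟩, ?_⟩
  rintro ρ' ⟨hshape', γ₀', δ', hγ₀', hδ', hγ'⟩
  have hmem : (γ₀'⁻¹ * γ₀) ∈ Gamma0 (q ^ e) := mul_mem (inv_mem hγ₀') hγ₀
  have hδδ : (δ * δ'⁻¹).1 1 0 = 0 := lower_zero_mul _ _ hδ (lower_zero_inv _ hδ')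
  have heq : ρ' = (γ₀'⁻¹ * γ₀) * ρ * (δ * δ'⁻¹) := by
    have h1 : γ₀' * ρ' * δ' = γ₀ * ρ * δ := by rw [← hγ', ← hγ]
    calc ρ' = γ₀'⁻¹ * (γ₀' * ρ' * δ') * δ'⁻¹ := by group
      _ = γ₀'⁻¹ * (γ₀ * ρ * δ) * δ'⁻¹ := by rw [h1]
      _ = (γ₀'⁻¹ * γ₀) * ρ * (δ * δ'⁻¹) := by group
  exact shape_eq q e hq he ρ ρ' (γ₀'⁻¹ * γ₀) (δ * δ'⁻¹) hshape hshape' hmem hδδ heq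
end

section
/- Let q be a prime, e ≥ 1, and let χ be a Dirichlet character mod q^e of conductor q^{e₀}. Fix 1 ≤ l < e with max(l, e-l) < e₀, and let m = max(l, e-l). Then the homomorphism φ: Z/q^{e-m}Z → C^× given by φ(c) = χ(1 + c q^m) is surjective onto the group of q^{e₀ - m}-th roots of unity, and its kernel is the subgroup generated by q^{e₀ - m}. -/
private lemma aux_cast_eq {n : ℕ} {a b : ℤ} (h : (n:ℤ) ∣ b - a) :
    ((a : ℤ) : ZMod n) = ((b : ℤ) : ZMod n) :=
  (ZMod.intCast_eq_intCast_iff _ _ _).mpr (Int.modEq_iff_dvd.mpr h)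

private lemma aux_hom {q e m : ℕ} (h2m : e ≤ 2*m)
    (χ : DirichletCharacter ℂ (q^e)) (c d : ℤ) :
    χ (((1 + (c+d) * (q:ℤ)^m : ℤ)) : ZMod (q^e)) =
      χ (((1 + c * (q:ℤ)^m : ℤ)) : ZMod (q^e)) * χ (((1 + d * (q:ℤ)^m : ℤ)) : ZMod (q^e)) := by
  have key : ((1 + (c+d) * (q:ℤ)^m : ℤ) : ZMod (q^e))
      = (((1 + c * (q:ℤ)^m) * (1 + d * (q:ℤ)^m) : ℤ) : ZMod (q^e)) := by
    apply aux_cast_eq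
    have h1 : ((1 + c * (q:ℤ)^m) * (1 + d * (q:ℤ)^m)) - (1 + (c+d) * (q:ℤ)^m)
        = c * d * ((q:ℤ)^m * (q:ℤ)^m) := by ring
    rw [h1]
    refine Dvd.dvd.mul_left ?_ _
    rw [← pow_add]
    have : ((q^e : ℕ) : ℤ) = (q:ℤ)^e := by push_cast; ring
    rw [this]
    exact pow_dvd_pow _ (by omega)
  rw [key, Int.cast_mul, map_mul]

private lemma aux_pow {q e m : ℕ} (h2m : e ≤ 2*m)
    (χ : DirichletCharacter ℂ (q^e)) (c : ℤ) (n : ℕ) :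
    χ (((1 + c * (q:ℤ)^m : ℤ)) : ZMod (q^e)) ^ n
      = χ (((1 + (n:ℤ) * c * (q:ℤ)^m : ℤ)) : ZMod (q^e)) := by
  induction n with
  | zero => simp
  | succ n ih =>
    have harg : (1 + ((n+1 : ℕ):ℤ) * c * (q:ℤ)^m : ℤ) = 1 + ((n:ℤ)*c + c) * (q:ℤ)^m := by
      push_cast; ring
    rw [pow_succ, ih, harg, aux_hom h2m χ ((n:ℤ)*c) c]

private lemma aux_congr {q e m : ℕ} (hme : m ≤ e)
    (χ : DirichletCharacter ℂ (q^e)) {c c' : ℤ} (h : (q:ℤ)^(e-m) ∣ c' - c) :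
    χ (((1 + c * (q:ℤ)^m : ℤ)) : ZMod (q^e)) = χ (((1 + c' * (q:ℤ)^m : ℤ)) : ZMod (q^e)) := by
  congr 1
  apply aux_cast_eq
  have h1 : (1 + c' * (q:ℤ)^m) - (1 + c * (q:ℤ)^m) = (c' - c) * (q:ℤ)^m := by ring
  rw [h1]
  have : ((q^e : ℕ) : ℤ) = (q:ℤ)^(e-m) * (q:ℤ)^m := by
    push_cast
    rw [← pow_add]
    congr 1
    omega
  rw [this]
  exact mul_dvd_mul h dvd_rfl

/-- Triviality: if the conductor divides `q^k` then `χ(1 + c q^k) = 1`. -/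
private lemma aux_triv {q e k : ℕ} (hq : q.Prime) (χ : DirichletCharacter ℂ (q^e))
    (hdk : χ.conductor ∣ q^k) (hk1 : 1 ≤ k) (c : ℤ) :
    χ (((1 + c * (q:ℤ)^k : ℤ)) : ZMod (q^e)) = 1 := by
  obtain ⟨hdvd, χ₀, hχ⟩ := χ.factorsThrough_conductor
  -- the argument is a unit
  have hnil : IsNilpotent ((c * (q:ℤ)^k : ℤ) : ZMod (q^e)) := by
    refine ⟨e, ?_⟩
    rw [← Int.cast_pow]
    rw [ZMod.intCast_zmod_eq_zero_iff_dvd]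
    have : ((q^e : ℕ) : ℤ) = (q:ℤ)^e := by push_cast; ring
    rw [this, mul_pow, ← pow_mul]
    exact Dvd.dvd.mul_left (pow_dvd_pow _ (Nat.le_mul_of_pos_left e hk1)) _
  have hu : IsUnit (((1 + c * (q:ℤ)^k : ℤ)) : ZMod (q^e)) := by
    rw [Int.cast_add, Int.cast_one]
    exact hnil.isUnit_one_add
  have hval : χ (((1 + c * (q:ℤ)^k : ℤ)) : ZMod (q^e)) = χ ↑hu.unit := by
    rw [IsUnit.unit_spec]
  rw [hval, hχ, DirichletCharacter.changeLevel_eq_cast_of_dvd]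
  have hcast : (ZMod.cast ((hu.unit : ZMod (q^e))) : ZMod χ.conductor)
      = (((1 + c * (q:ℤ)^k : ℤ)) : ZMod χ.conductor) := by
    rw [IsUnit.unit_spec, ← ZMod.castHom_apply (h := hdvd), map_intCast]
  rw [hcast]
  have h1 : (((1 + c * (q:ℤ)^k : ℤ)) : ZMod χ.conductor) = 1 := by
    have := aux_cast_eq (n := χ.conductor) (a := (1:ℤ)) (b := 1 + c * (q:ℤ)^k) ?_
    · rw [← this, Int.cast_one]
    · have h2 : (1 + c * (q:ℤ)^k) - 1 = c * (q:ℤ)^k := by ring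
      rw [h2]
      refine Dvd.dvd.mul_left ?_ _
      exact_mod_cast Int.natCast_dvd_natCast.mpr hdk
  rw [h1, map_one]

/-- Minimality: if `χ` is trivial on `1 + c q^k` for all `c`, the conductor is at most `q^k`. -/
private lemma aux_min {q e k : ℕ} (hq : q.Prime) (χ : DirichletCharacter ℂ (q^e))
    (hk : k ≤ e) (h : ∀ c : ℤ, χ (((1 + c * (q:ℤ)^k : ℤ)) : ZMod (q^e)) = 1) :
    χ.conductor ≤ q^k := by
  haveI : NeZero (q^e) := ⟨pow_ne_zero _ hq.ne_zero⟩
  have hdvd : q^k ∣ q^e := pow_dvd_pow q hk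
  have hft : χ.FactorsThrough (q^k) := by
    rw [DirichletCharacter.factorsThrough_iff_ker_unitsMap hdvd]
    intro u hu
    rw [MonoidHom.mem_ker] at hu ⊢
    have hu' : (ZMod.castHom hdvd (ZMod (q^k))) (u : ZMod (q^e)) = 1 := by
      have := congrArg (Units.val) hu
      simpa [ZMod.unitsMap_def] using this
    set a : ℕ := (u : ZMod (q^e)).val with ha
    have haa : ((a : ℕ) : ZMod (q^e)) = (u : ZMod (q^e)) := by
      simp [ha, ZMod.natCast_val, ZMod.cast_id]
    have hk1 : ((a : ℤ) : ZMod (q^k)) = 1 := by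
      rw [← hu', ← haa]
      push_cast
      rw [map_natCast]
    have hdvd1 : ((q:ℤ)^k) ∣ (a : ℤ) - 1 := by
      have : (((a : ℤ) - 1 : ℤ) : ZMod (q^k)) = 0 := by
        rw [Int.cast_sub, Int.cast_one, hk1, sub_self]
      have h2 := (ZMod.intCast_zmod_eq_zero_iff_dvd _ _).mp this
      exact_mod_cast h2
    obtain ⟨c, hc⟩ := hdvd1
    have hac : (a : ℤ) = 1 + c * (q:ℤ)^k := by linear_combination hc
    have : χ (u : ZMod (q^e)) = 1 := by
      rw [← haa]
      have : ((a : ℕ) : ZMod (q^e)) = (((a:ℤ)) : ZMod (q^e)) := by push_cast; rfl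
      rw [this, hac]
      exact h c
    ext
    rw [MulChar.coe_toUnitHom]
    simpa using this
  calc χ.conductor ≤ q^k := Nat.sInf_le hft

/-- Let `χ` be a Dirichlet character mod `q^e` of conductor `q^{e₀}`, `1 ≤ l < e` with
`m = max(l, e-l) < e₀`. The homomorphism `c ↦ χ(1 + c q^m)` takes values in the
`q^{e₀-m}`-th roots of unity, is surjective onto them, and its kernel consists exactly of
the multiples of `q^{e₀-m}` (i.e. the kernel in `Z/q^{e-m}Z` is the subgroup generated by
`q^{e₀-m}`). -/
theorem char_on_Um_image_and_kernel (q e e₀ l : ℕ) (hq : q.Prime) (he : 1 ≤ e)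
    (χ : DirichletCharacter ℂ (q ^ e)) (hcond : χ.conductor = q ^ e₀)
    (hl : 1 ≤ l) (hle : l < e) (hm : max l (e - l) < e₀) :
    (∀ c : ℤ,
      (χ (((1 + c * (q : ℤ) ^ (max l (e - l))) : ℤ) : ZMod (q ^ e)))
        ^ (q ^ (e₀ - max l (e - l))) = 1) ∧
    (∀ z : ℂ, z ^ (q ^ (e₀ - max l (e - l))) = 1 →
      ∃ c : ℤ, χ (((1 + c * (q : ℤ) ^ (max l (e - l))) : ℤ) : ZMod (q ^ e)) = z) ∧
    (∀ c : ℤ,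
      χ (((1 + c * (q : ℤ) ^ (max l (e - l))) : ℤ) : ZMod (q ^ e)) = 1 ↔
        (q : ℤ) ^ (e₀ - max l (e - l)) ∣ c) := by
  set m := max l (e - l) with hmdef
  have hm1 : 1 ≤ m := le_trans hl (le_max_left _ _)
  have h2m : e ≤ 2*m := by omega
  have he₀e : e₀ ≤ e := by
    have h1 : q ^ e₀ ∣ q ^ e := hcond ▸ χ.conductor_dvd_level
    exact (Nat.pow_dvd_pow_iff_le_right hq.one_lt).mp h1
  have hme : m < e := lt_of_lt_of_le hm he₀e
  have hdcond : χ.conductor ∣ q ^ e₀ := hcond ▸ dvd_rfl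
  have he₀1 : 1 ≤ e₀ := by omega
  have hsum : (e₀ - m) + m = e₀ := by omega
  -- Part 1
  have part1 : ∀ c : ℤ,
      (χ (((1 + c * (q : ℤ) ^ m) : ℤ) : ZMod (q ^ e))) ^ (q ^ (e₀ - m)) = 1 := by
    intro c
    rw [aux_pow h2m]
    have hqq : (q:ℤ)^(e₀-m) * (q:ℤ)^m = (q:ℤ)^e₀ := by rw [← pow_add, hsum]
    have harg : (1 + ((q ^ (e₀ - m) : ℕ) : ℤ) * c * (q:ℤ)^m : ℤ) = 1 + c * (q:ℤ)^e₀ := by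
      push_cast
      rw [← hqq]
      ring
    rw [harg]
    exact aux_triv hq χ hdcond he₀1 c
  -- Part 3
  have part3 : ∀ c : ℤ,
      χ (((1 + c * (q : ℤ) ^ m) : ℤ) : ZMod (q ^ e)) = 1 ↔
        (q : ℤ) ^ (e₀ - m) ∣ c := by
    intro c
    constructor
    · intro hc1
      by_contra hnd
      -- c ≠ 0 and valuation v < e₀ - m
      have hc0 : c ≠ 0 := by rintro rfl; exact hnd (dvd_zero _)
      have hn0 : c.natAbs ≠ 0 := Int.natAbs_ne_zero.mpr hc0
      haveI : Fact q.Prime := ⟨hq⟩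
      set v := padicValNat q c.natAbs with hv
      have hqv : (q:ℤ)^v ∣ c := by
        have h1 : (q:ℕ)^v ∣ c.natAbs := pow_padicValNat_dvd
        have h2 : ((q:ℤ))^v ∣ (c.natAbs : ℤ) := by exact_mod_cast Int.natCast_dvd_natCast.mpr h1
        exact (Int.dvd_natAbs).mp h2
      have hqv1 : ¬ (q:ℤ)^(v+1) ∣ c := by
        intro hdvd1
        have h1 : ((q^(v+1) : ℕ) : ℤ) ∣ c := by exact_mod_cast hdvd1
        have h2 : (q:ℕ)^(v+1) ∣ c.natAbs := by
          rwa [← Int.natCast_dvd_natCast, Int.dvd_natAbs]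
        exact pow_succ_padicValNat_not_dvd hn0 h2
      have hvlt : v < e₀ - m := by
        by_contra hge
        exact hnd (dvd_trans (pow_dvd_pow _ (by omega)) hqv)
      obtain ⟨u, hu⟩ := hqv
      have hqu : ¬ (q:ℤ) ∣ u := by
        intro hdq
        apply hqv1
        obtain ⟨w, hw⟩ := hdq
        exact ⟨w, by rw [hu, hw, pow_succ]; ring⟩
      -- u is coprime to q^(e-m)
      have hqprime : Prime (q:ℤ) := Nat.prime_iff_prime_int.mp hq
      have hcop : IsCoprime ((q:ℤ)^(e-m)) u :=
        IsCoprime.pow_left (hqprime.coprime_iff_not_dvd.mpr hqu)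
      obtain ⟨a, b, hab⟩ := hcop
      -- for every d, χ(1 + d q^(m+v)) = 1
      have hker : ∀ z : ℤ, χ (((1 + z * c * (q : ℤ) ^ m) : ℤ) : ZMod (q ^ e)) = 1 := by
        intro z
        obtain ⟨n, rfl | rfl⟩ := Int.eq_nat_or_neg z
        · rw [← aux_pow h2m, hc1, one_pow]
        · have hplus : χ (((1 + (n:ℤ) * c * (q : ℤ) ^ m) : ℤ) : ZMod (q ^ e)) = 1 := by
            rw [← aux_pow h2m, hc1, one_pow]
          have hzero : χ (((1 + (0:ℤ) * (q : ℤ) ^ m) : ℤ) : ZMod (q ^ e)) = 1 := by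
            norm_num
          have := aux_hom h2m χ (-(n:ℤ) * c) ((n:ℤ) * c)
          rw [show (-(n:ℤ) * c + (n:ℤ)*c) = 0 by ring] at this
          rw [hzero, hplus] at this
          rw [mul_one] at this
          exact this.symm
      have hUmv : ∀ d : ℤ, χ (((1 + d * (q : ℤ) ^ (m+v)) : ℤ) : ZMod (q ^ e)) = 1 := by
        intro d
        have h1 : χ (((1 + (d * (q:ℤ)^v) * (q : ℤ) ^ m) : ℤ) : ZMod (q ^ e)) = 1 := by
          rw [aux_congr (le_of_lt hme) χ (c' := (d * b) * c) ?_]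
          · exact hker (d*b)
          · have : d * b * c - d * (q:ℤ)^v = d * (q:ℤ)^v * (b * u - 1) := by
              rw [hu]; ring
            rw [this]
            have h3 : b * u - 1 = -(a * (q:ℤ)^(e-m)) := by linarith [hab]
            rw [h3]
            exact ⟨-(d * (q:ℤ)^v * a), by ring⟩
        convert h1 using 4
        rw [pow_add]
        ring
      -- conductor minimality gives a contradiction
      have hmin : χ.conductor ≤ q^(m+v) := aux_min hq χ (by omega) hUmv
      rw [hcond] at hmin
      have : e₀ ≤ m + v := (Nat.pow_le_pow_iff_right hq.one_lt).mp hmin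
      omega
    · rintro ⟨d, rfl⟩
      have hqq : (q:ℤ)^(e₀-m) * (q:ℤ)^m = (q:ℤ)^e₀ := by rw [← pow_add, hsum]
      have harg : (1 + (q:ℤ)^(e₀-m) * d * (q:ℤ)^m : ℤ) = 1 + d * (q:ℤ)^e₀ := by
        rw [← hqq]
        ring
      rw [harg]
      exact aux_triv hq χ hdcond he₀1 d
  -- Part 2
  have part2 : ∀ z : ℂ, z ^ (q ^ (e₀ - m)) = 1 →
      ∃ c : ℤ, χ (((1 + c * (q : ℤ) ^ m) : ℤ) : ZMod (q ^ e)) = z := by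
    intro z hz
    haveI : NeZero (q ^ (e₀ - m)) := ⟨pow_ne_zero _ hq.ne_zero⟩
    set ζ := χ (((1 + (1:ℤ) * (q : ℤ) ^ m) : ℤ) : ZMod (q ^ e)) with hζ
    have hprim : IsPrimitiveRoot ζ (q ^ (e₀ - m)) := by
      rw [IsPrimitiveRoot.iff_def]
      refine ⟨part1 1, fun n hn => ?_⟩
      rw [aux_pow h2m, mul_one] at hn
      have := (part3 (n:ℤ)).mp hn
      have h2 : ((q^(e₀-m) : ℕ) : ℤ) ∣ (n : ℤ) := by exact_mod_cast this
      exact_mod_cast h2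
    obtain ⟨i, _, hi⟩ := hprim.eq_pow_of_pow_eq_one hz
    refine ⟨(i:ℤ), ?_⟩
    rw [← hi, hζ, aux_pow h2m, mul_one]
  exact ⟨part1, part2, part3⟩
end

section
/- Let N ≥ 1, χ a Dirichlet character mod N, and γ ∈ SL(2,Z) with bottom row (c,d). Let a be an integer prime to N, and let γ' ∈ SL(2,Z) have bottom row congruent to (λ a c, λ d) mod N for some unit λ mod N. If m is the width of γ for Γ₀(N) (least positive m with γ(1 m;0 1)γ⁻¹ ∈ Γ₀(N)) and m' that of γ', then m' = m; moreover if d_γ and d_{γ'} denote the lower-right entries of γ(1 m;0 1)γ⁻¹ and γ'(1 m';0 1)(γ')⁻¹ respectively, then χ(d_{γ'}) = χ(d_γ)^a. -/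
open CongruenceSubgroup

/-- The upper unitriangular matrix `(1 m; 0 1)` in `SL(2,ℤ)`. -/
def upperT (m : ℤ) : Matrix.SpecialLinearGroup (Fin 2) ℤ :=
  ⟨!![1, m; 0, 1], by simp [Matrix.det_fin_two_of]⟩

lemma upperT_entries (γ : Matrix.SpecialLinearGroup (Fin 2) ℤ) (k : ℤ) :
    (γ * upperT k * γ⁻¹).1 1 0 = -(k * γ.1 1 0 * γ.1 1 0) ∧
    (γ * upperT k * γ⁻¹).1 1 1 = 1 + k * γ.1 1 0 * γ.1 0 0 := by
  have hdet : γ.1 0 0 * γ.1 1 1 - γ.1 0 1 * γ.1 1 0 = 1 := by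
    have := γ.2; rwa [Matrix.det_fin_two] at this
  have e : (γ * upperT k * γ⁻¹).1 = γ.1 * (upperT k).1 * (γ⁻¹).1 := rfl
  rw [e]
  constructor <;>
    simp [upperT, Matrix.mul_apply, Fin.sum_univ_succ, Matrix.SpecialLinearGroup.coe_inv, Matrix.adjugate_fin_two] <;> linarith [hdet]

def nilUnit {R : Type*} [CommRing R] (x : R) (hx : x * x = 0) : Rˣ :=
  ⟨1 + x, 1 - x, by linear_combination -hx, by linear_combination -hx⟩

lemma nilUnit_pow {R : Type*} [CommRing R] (x : R) (hx : x * x = 0) (n : ℕ) :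
    ((nilUnit x hx ^ n : Rˣ) : R) = 1 + (n : R) * x := by
  induction n with
  | zero => simp
  | succ k ih =>
      rw [pow_succ, Units.val_mul, ih]
      show (1 + (k:R)*x) * (1 + x) = 1 + ((k:ℕ)+1 : ℕ) * x
      push_cast
      linear_combination (k : R) * hx

lemma nilUnit_zpow {R : Type*} [CommRing R] (x : R) (hx : x * x = 0) (n : ℤ) :
    ((nilUnit x hx ^ n : Rˣ) : R) = 1 + (n : R) * x := by
  cases n with
  | ofNat k => rw [Int.ofNat_eq_coe, zpow_natCast, nilUnit_pow]; push_cast; ring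
  | negSucc k =>
      rw [zpow_negSucc]
      have h1 : (nilUnit x hx) ^ (k + 1) = nilUnit ((k+1 : ℕ) * x)
          (by push_cast; linear_combination ((k:R)+1)*((k:R)+1) * hx) := by
        ext
        rw [nilUnit_pow]
        rfl
      rw [h1]
      have : (nilUnit ((k+1 : ℕ) * x) (by push_cast; linear_combination ((k:R)+1)*((k:R)+1) * hx))⁻¹ =
          nilUnit (-((k+1:ℕ) * x)) (by push_cast; linear_combination ((k:R)+1)*((k:R)+1) * hx) := by
        symm; apply eq_inv_of_mul_eq_one_left
        ext
        show (1 + -((k+1:ℕ) * x)) * (1 + (k+1:ℕ)*x) = 1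
        push_cast
        linear_combination (-((k:R)+1)*((k:R)+1)) * hx
      rw [this]
      show 1 + -((k+1:ℕ) * x) = 1 + (Int.negSucc k : R) * x
      push_cast [Int.cast_negSucc]
      ring


/-- If `γ'` has bottom row congruent to `(λ a c, λ d)` mod `N`, where `(c,d)` is the bottom
row of `γ`, `λ` is a unit mod `N` and `gcd(a,N)=1`, then `γ` and `γ'` have the same width for
`Γ₀(N)`, and `χ(d_{γ'}) = χ(d_γ)^a` where `d_γ, d_{γ'}` are the lower-right entries of the
conjugated width-translations. -/
theorem width_and_cusp_parameter_under_unit_action (N : ℕ) (hN : 1 ≤ N)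
    (χ : DirichletCharacter ℂ N)
    (γ γ' : Matrix.SpecialLinearGroup (Fin 2) ℤ)
    (a : ℤ) (ha : Int.gcd a N = 1) (lam : (ZMod N)ˣ)
    (h1 : ((γ'.1 1 0 : ℤ) : ZMod N) = (lam : ZMod N) * (a : ZMod N) * ((γ.1 1 0 : ℤ) : ZMod N))
    (h2 : ((γ'.1 1 1 : ℤ) : ZMod N) = (lam : ZMod N) * ((γ.1 1 1 : ℤ) : ZMod N))
    (m m' : ℕ)
    (hm : IsLeast {k : ℕ | 0 < k ∧ γ * upperT (k : ℤ) * γ⁻¹ ∈ Gamma0 N} m)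
    (hm' : IsLeast {k : ℕ | 0 < k ∧ γ' * upperT (k : ℤ) * γ'⁻¹ ∈ Gamma0 N} m') :
    m' = m ∧
      χ (((γ' * upperT (m' : ℤ) * γ'⁻¹).1 1 1 : ℤ) : ZMod N) =
        χ (((γ * upperT (m : ℤ) * γ⁻¹).1 1 1 : ℤ) : ZMod N) ^ a := by
  -- notation
  set R := ZMod N
  set C : R := ((γ.1 1 0 : ℤ) : R) with hC
  set D : R := ((γ.1 1 1 : ℤ) : R) with hD
  set P : R := ((γ.1 0 0 : ℤ) : R) with hP
  set Q : R := ((γ.1 0 1 : ℤ) : R) with hQ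
  set C' : R := ((γ'.1 1 0 : ℤ) : R) with hC'
  set D' : R := ((γ'.1 1 1 : ℤ) : R) with hD'
  set P' : R := ((γ'.1 0 0 : ℤ) : R) with hP'
  set Q' : R := ((γ'.1 0 1 : ℤ) : R) with hQ'
  set L : R := (lam : R) with hL
  set A : R := ((a : ℤ) : R) with hA
  -- membership criterion
  have key : ∀ (g : Matrix.SpecialLinearGroup (Fin 2) ℤ) (k : ℕ),
      (g * upperT (k : ℤ) * g⁻¹ ∈ Gamma0 N) ↔
        (k : R) * ((g.1 1 0 : ℤ) : R) * ((g.1 1 0 : ℤ) : R) = 0 := by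
    intro g k
    rw [Gamma0_mem]
    rw [show ((g * upperT (k:ℤ) * g⁻¹) 1 0 : ℤ) = (g * upperT (k:ℤ) * g⁻¹).1 1 0 from rfl,
      (upperT_entries g (k:ℤ)).1]
    push_cast
    rw [neg_eq_zero]
  -- units
  have haU : IsUnit A := by
    have h := (Int.isCoprime_iff_gcd_eq_one.mpr ha).map (Int.castRingHom R)
    simp only [Int.coe_castRingHom, map_intCast, map_natCast] at h
    rw [hA]
    exact isCoprime_zero_right.mp ((ZMod.natCast_self N) ▸ h)
  have hLaU : IsUnit (L * A) := (lam.isUnit).mul haU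
  obtain ⟨u, hu⟩ := hLaU
  -- determinant identities mod N
  have hdet : P * D - Q * C = 1 := by
    have h := γ.2; rw [Matrix.det_fin_two] at h
    rw [hP, hD, hQ, hC]
    push_cast
    have h' := congrArg (Int.cast : ℤ → R) h
    rw [Int.cast_sub, Int.cast_mul, Int.cast_mul, Int.cast_one] at h'
    exact h'
  have hdet' : P' * D' - Q' * C' = 1 := by
    have h := γ'.2; rw [Matrix.det_fin_two] at h
    rw [hP', hD', hQ', hC']
    push_cast
    have h' := congrArg (Int.cast : ℤ → R) h
    rw [Int.cast_sub, Int.cast_mul, Int.cast_mul, Int.cast_one] at h'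
    exact h'
  -- the two width sets coincide
  have hsets : {k : ℕ | 0 < k ∧ γ' * upperT (k : ℤ) * γ'⁻¹ ∈ Gamma0 N}
      = {k : ℕ | 0 < k ∧ γ * upperT (k : ℤ) * γ⁻¹ ∈ Gamma0 N} := by
    ext k
    simp only [Set.mem_setOf_eq, key, ← hC, ← hC']
    rw [h1]
    constructor
    · rintro ⟨hk, h⟩
      refine ⟨hk, ?_⟩
      have h' : (u : R) * ((u : R) * ((k : R) * C * C)) = 0 := by
        rw [hu]; linear_combination h
      rw [Units.mul_right_eq_zero, Units.mul_right_eq_zero] at h'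
      exact h'
    · rintro ⟨hk, h⟩
      exact ⟨hk, by linear_combination (L*A*L*A) * h⟩
  have hmm : m' = m := by
    rw [hsets] at hm'
    exact hm'.unique hm
  refine ⟨hmm, ?_⟩
  subst hmm
  -- rewrite the entries
  rw [(upperT_entries γ (m':ℤ)).2, (upperT_entries γ' (m':ℤ)).2]
  push_cast
  rw [← hC, ← hC', ← hP, ← hP']
  -- the nilpotency
  have hc : (m' : R) * C * C = 0 := by
    have := (key γ m').mp hm.1.2
    rwa [← hC] at this
  set x : R := (m' : R) * C * P with hx
  have hxx : x * x = 0 := by rw [hx]; linear_combination ((m':R) * P * P) * hc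
  have hx' : (m' : R) * C' * P' = A * x := by
    rw [h1, h2] at hdet'
    rw [h1, hx]
    linear_combination (A*(m':R)*C*P) * hdet' - (A*(m':R)*C*L*P') * hdet
      + (A^2*L*P*Q' - A*L*Q*P') * hc
  rw [show (1 : R) + (m':R) * C' * P' = 1 + A * x by rw [hx']]
  have h4 : (1 + A * x) = ((nilUnit x hxx ^ a : Rˣ) : R) := by
    rw [nilUnit_zpow]
  rw [h4]
  rw [← MulChar.coe_equivToUnitHom χ (nilUnit x hxx ^ a), map_zpow,
    Units.val_zpow_eq_zpow_val, MulChar.coe_equivToUnitHom]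
  rfl
end

section
/- Let p be a prime and let S_p be the set consisting of the matrix (p 0; 0 1) together with the matrices (1 i; 0 p) for 0 ≤ i ≤ p-1. Then for every ξ ∈ S_p and γ ∈ SL(2,Z) there exist unique ξ' ∈ S_p and γ' ∈ SL(2,Z) with ξγ = γ'ξ'; moreover, for fixed γ, the map ξ ↦ ξ' is a bijection of S_p. -/
/-- The set `S_p = {(p 0; 0 1)} ∪ {(1 i; 0 p) : 0 ≤ i < p}` of integer matrices. -/
def heckeSet (p : ℕ) : Set (Matrix (Fin 2) (Fin 2) ℤ) :=
  {!![(p : ℤ), 0; 0, 1]} ∪ {M | ∃ i : ℕ, i < p ∧ M = !![1, (i : ℤ); 0, (p : ℤ)]}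

lemma heckeSet_det {p : ℕ} {ξ : Matrix (Fin 2) (Fin 2) ℤ} (h : ξ ∈ heckeSet p) :
    ξ.det = p := by
  rcases h with h | ⟨i, hi, rfl⟩
  · rw [Set.mem_singleton_iff] at h
    subst h
    simp [Matrix.det_fin_two_of]
  · simp [Matrix.det_fin_two_of]

/-- Two elements of `S_p` in the same left `SL(2,ℤ)`-orbit are equal, and the
connecting element is `1`. -/
lemma heckeSet_orbit_eq {p : ℕ} (hp : p.Prime) {ξ₁ ξ₂ : Matrix (Fin 2) (Fin 2) ℤ}
    (h1 : ξ₁ ∈ heckeSet p) (h2 : ξ₂ ∈ heckeSet p)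
    (δ : Matrix.SpecialLinearGroup (Fin 2) ℤ) (h : δ.1 * ξ₁ = ξ₂) :
    ξ₁ = ξ₂ ∧ δ = 1 := by
  have hdet : δ.1 0 0 * δ.1 1 1 - δ.1 0 1 * δ.1 1 0 = 1 := by
    have := δ.2
    rwa [Matrix.det_fin_two] at this
  obtain ⟨x, y, z, w, hδ, hxd⟩ :
      ∃ x y z w : ℤ, δ.1 = !![x, y; z, w] ∧
        x = δ.1 0 0 ∧ y = δ.1 0 1 ∧ z = δ.1 1 0 ∧ w = δ.1 1 1 :=
    ⟨δ.1 0 0, δ.1 0 1, δ.1 1 0, δ.1 1 1, Matrix.eta_fin_two δ.1, rfl, rfl, rfl, rfl⟩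
  obtain ⟨rfl, rfl, rfl, rfl⟩ := hxd
  set x := δ.1 0 0
  set y := δ.1 0 1
  set z := δ.1 1 0
  set w := δ.1 1 1
  have hple : 2 ≤ (p : ℤ) := by exact_mod_cast hp.two_le
  have hone : ∀ t : ℤ, ¬ ((p : ℤ) * t = 1) := by
    intro t ht
    have : (p : ℤ) ∣ 1 := ⟨t, ht.symm⟩
    have := Int.le_of_dvd one_pos this
    omega
  have hδone : x = 1 → y = 0 → z = 0 → w = 1 → δ = 1 := by
    intro h1 h2 h3 h4
    apply Subtype.ext
    rw [hδ, h1, h2, h3, h4, Matrix.SpecialLinearGroup.coe_one, Matrix.one_fin_two]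
  rcases h1 with h1 | ⟨i, hi, rfl⟩ <;> [rw [Set.mem_singleton_iff] at h1; skip]
  · subst h1
    rcases h2 with h2 | ⟨j, hj, rfl⟩
    · rw [Set.mem_singleton_iff] at h2
      subst h2
      rw [hδ, Matrix.mul_fin_two, ← Matrix.ext_iff] at h
      have e00 := h 0 0; have e01 := h 0 1; have e10 := h 1 0; have e11 := h 1 1
      simp at e00 e01 e10 e11
      have hx1 : x = 1 := by
        have hpx : x * (p:ℤ) = 1 * (p:ℤ) := by linarith
        exact mul_right_cancel₀ (by omega) hpx
      have hz0 : z = 0 := e10.resolve_right hp.ne_zero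
      exact ⟨rfl, hδone hx1 e01 hz0 e11⟩
    · rw [hδ, Matrix.mul_fin_two, ← Matrix.ext_iff] at h
      have e00 := h 0 0
      simp at e00
      exact absurd (by linarith : (p:ℤ) * x = 1) (hone x)
  · rcases h2 with h2 | ⟨j, hj, rfl⟩
    · rw [Set.mem_singleton_iff] at h2
      subst h2
      rw [hδ, Matrix.mul_fin_two, ← Matrix.ext_iff] at h
      have e00 := h 0 0; have e10 := h 1 0
      simp at e00 e10
      rw [e00, e10] at hdet
      exact absurd (by linarith : (p:ℤ) * w = 1) (hone w)
    · rw [hδ, Matrix.mul_fin_two, ← Matrix.ext_iff] at h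
      have e00 := h 0 0; have e01 := h 0 1; have e10 := h 1 0; have e11 := h 1 1
      simp at e00 e01 e10 e11
      have hx1 : x = 1 := e00
      have hz0 : z = 0 := e10
      have hw1 : w = 1 := by
        rw [hz0] at e11
        have hw : w * (p:ℤ) = 1 * (p:ℤ) := by linarith
        exact mul_right_cancel₀ (by omega) hw
      have hiz : (i : ℤ) < p := by exact_mod_cast hi
      have hjz : (j : ℤ) < p := by exact_mod_cast hj
      have hinn : (0:ℤ) ≤ i := Int.natCast_nonneg i
      have hjnn : (0:ℤ) ≤ j := Int.natCast_nonneg j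
      have heij : (i : ℤ) + y * p = j := by
        rw [hx1] at e01; linarith
      have hy0 : y = 0 := by nlinarith
      have hij : i = j := by
        rw [hy0, zero_mul, add_zero] at heij
        exact_mod_cast heij
      subst hij
      exact ⟨rfl, hδone hx1 hy0 hz0 hw1⟩

/-- Existence of the decomposition for an explicit matrix of determinant `p`. -/
lemma hecke_decomp_exists (p : ℕ) (hp : p.Prime) (a b c d : ℤ)
    (hdet : a * d - b * c = p) :
    ∃ x : Matrix (Fin 2) (Fin 2) ℤ × Matrix.SpecialLinearGroup (Fin 2) ℤ,
      x.1 ∈ heckeSet p ∧ !![a, b; c, d] = x.2.1 * x.1 := by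
  haveI : Fact p.Prime := ⟨hp⟩
  have hp0 : (p : ℤ) ≠ 0 := by exact_mod_cast hp.ne_zero
  by_cases hdvd : (p:ℤ) ∣ a ∧ (p:ℤ) ∣ c
  · obtain ⟨⟨a', rfl⟩, ⟨c', rfl⟩⟩ := hdvd
    have hdet1 : a' * d - b * c' = 1 := by
      have hh : (p:ℤ) * (a' * d - b * c') = (p:ℤ) * 1 := by linarith [hdet]
      exact mul_left_cancel₀ hp0 hh
    refine ⟨⟨!![(p:ℤ), 0; 0, 1], ⟨!![a', b; c', d], ?_⟩⟩, Or.inl rfl, ?_⟩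
    · rw [Matrix.det_fin_two_of]; linarith
    · rw [Matrix.mul_fin_two]
      ext i j
      fin_cases i <;> fin_cases j <;> simp <;> ring
  · have hcast : (a : ZMod p) * (d : ZMod p) = (b : ZMod p) * (c : ZMod p) := by
      have hh : ((a * d - b * c : ℤ) : ZMod p) = ((p : ℤ) : ZMod p) := by rw [hdet]
      push_cast at hh
      simp only [ZMod.natCast_self] at hh
      linear_combination hh
    set j : ZMod p := if (p:ℤ) ∣ a then (d : ZMod p) * (c : ZMod p)⁻¹
      else (b : ZMod p) * (a : ZMod p)⁻¹ with hj
    set i : ℕ := j.val with hi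
    have hji : ((i : ℕ) : ZMod p) = j := ZMod.natCast_rightInverse j
    have hilt : i < p := ZMod.val_lt j
    have key : (a : ZMod p) * j = (b : ZMod p) ∧ (c : ZMod p) * j = (d : ZMod p) := by
      by_cases hpa : (p:ℤ) ∣ a
      · have hpc : ¬ (p:ℤ) ∣ c := fun h => hdvd ⟨hpa, h⟩
        have hc0 : (c : ZMod p) ≠ 0 := fun h =>
          hpc ((ZMod.intCast_zmod_eq_zero_iff_dvd c p).1 h)
        have ha0 : (a : ZMod p) = 0 := (ZMod.intCast_zmod_eq_zero_iff_dvd a p).2 hpa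
        have h1c : (c : ZMod p) * (c : ZMod p)⁻¹ = 1 := mul_inv_cancel₀ hc0
        have hcast' : (b : ZMod p) * (c : ZMod p) = 0 := by
          rw [← hcast, ha0, zero_mul]
        have hb0 : (b : ZMod p) = 0 := by
          linear_combination (c : ZMod p)⁻¹ * hcast' - (b : ZMod p) * h1c
        rw [hj, if_pos hpa]
        exact ⟨by rw [ha0, hb0, zero_mul],
          by linear_combination (d : ZMod p) * h1c⟩
      · have ha0 : (a : ZMod p) ≠ 0 := fun h =>
          hpa ((ZMod.intCast_zmod_eq_zero_iff_dvd a p).1 h)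
        have h1a : (a : ZMod p) * (a : ZMod p)⁻¹ = 1 := mul_inv_cancel₀ ha0
        rw [hj, if_neg hpa]
        exact ⟨by linear_combination (b : ZMod p) * h1a,
          by linear_combination (-(a : ZMod p)⁻¹) * hcast + (d : ZMod p) * h1a⟩
    have hdb : (p:ℤ) ∣ b - a * i := by
      rw [← ZMod.intCast_zmod_eq_zero_iff_dvd]
      push_cast
      rw [hji]
      linear_combination -key.1
    have hdd : (p:ℤ) ∣ d - c * i := by
      rw [← ZMod.intCast_zmod_eq_zero_iff_dvd]
      push_cast
      rw [hji]
      linear_combination -key.2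
    obtain ⟨b', hb'⟩ := hdb
    obtain ⟨d', hd'⟩ := hdd
    have hdet1 : a * d' - b' * c = 1 := by
      have hh : (p:ℤ) * (a * d' - b' * c) = (p:ℤ) * 1 := by
        have e1 : (p:ℤ) * b' = b - a * i := hb'.symm
        have e2 : (p:ℤ) * d' = d - c * i := hd'.symm
        linear_combination a * e2 - c * e1 + hdet
      exact mul_left_cancel₀ hp0 hh
    refine ⟨⟨!![1, (i:ℤ); 0, (p:ℤ)], ⟨!![a, b'; c, d'], ?_⟩⟩,
      Or.inr ⟨i, hilt, rfl⟩, ?_⟩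
    · rw [Matrix.det_fin_two_of]; linarith
    · rw [Matrix.mul_fin_two]
      ext r s
      fin_cases r <;> fin_cases s <;> simp <;> linarith [hb', hd']

/-- Every integer matrix of determinant `p` factors uniquely as `γ' * ξ'` with
`γ' ∈ SL(2,ℤ)` and `ξ' ∈ S_p`. -/
lemma hecke_decomp (p : ℕ) (hp : p.Prime) (M : Matrix (Fin 2) (Fin 2) ℤ)
    (hM : M.det = p) :
    ∃! x : Matrix (Fin 2) (Fin 2) ℤ × Matrix.SpecialLinearGroup (Fin 2) ℤ,
      x.1 ∈ heckeSet p ∧ M = x.2.1 * x.1 := by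
  have hMeta : M = !![M 0 0, M 0 1; M 1 0, M 1 1] := Matrix.eta_fin_two M
  have hdet : M 0 0 * M 1 1 - M 0 1 * M 1 0 = p := by
    rw [Matrix.det_fin_two] at hM; exact hM
  obtain ⟨x, hx1, hx2⟩ := hecke_decomp_exists p hp (M 0 0) (M 0 1) (M 1 0) (M 1 1) hdet
  rw [← hMeta] at hx2
  obtain ⟨x1, x2⟩ := x
  refine ⟨(x1, x2), ⟨hx1, hx2⟩, ?_⟩
  rintro ⟨ξ', γ'⟩ ⟨hy1, hy2⟩
  simp only at hx1 hx2 hy1 hy2 ⊢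
  have heq : (x2⁻¹ * γ').1 * ξ' = x1 := by
    have h1 : x2.1 * x1 = γ'.1 * ξ' := by rw [← hx2, ← hy2]
    have h2 : (x2⁻¹).1 * (x2.1 * x1) = (x2⁻¹).1 * (γ'.1 * ξ') := by rw [h1]
    rw [← mul_assoc, ← mul_assoc, ← Matrix.SpecialLinearGroup.coe_mul,
      ← Matrix.SpecialLinearGroup.coe_mul, inv_mul_cancel] at h2
    simpa using h2.symm
  obtain ⟨hξeq, hδ1⟩ := heckeSet_orbit_eq hp hy1 hx1 _ heq
  have hγ : γ' = x2 := (inv_mul_eq_one.mp hδ1).symm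
  exact Prod.ext hξeq hγ

/-- For every `ξ ∈ S_p` and `γ ∈ SL(2,ℤ)` there exist unique `ξ' ∈ S_p` and `γ' ∈ SL(2,ℤ)`
with `ξγ = γ'ξ'`; moreover, for fixed `γ`, the induced map `ξ ↦ ξ'` is a bijection of `S_p`. -/
theorem hecke_coset_permutation (p : ℕ) (hp : p.Prime) :
    (∀ ξ ∈ heckeSet p, ∀ γ : Matrix.SpecialLinearGroup (Fin 2) ℤ,
      ∃! x : Matrix (Fin 2) (Fin 2) ℤ × Matrix.SpecialLinearGroup (Fin 2) ℤ,
        x.1 ∈ heckeSet p ∧ ξ * γ.1 = x.2.1 * x.1) ∧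
    (∀ γ : Matrix.SpecialLinearGroup (Fin 2) ℤ,
      ∃ f : Matrix (Fin 2) (Fin 2) ℤ → Matrix (Fin 2) (Fin 2) ℤ,
        Set.BijOn f (heckeSet p) (heckeSet p) ∧
        ∀ ξ ∈ heckeSet p, ∃ γ' : Matrix.SpecialLinearGroup (Fin 2) ℤ,
          ξ * γ.1 = γ'.1 * f ξ) := by
  have hdetmul : ∀ ξ ∈ heckeSet p, ∀ γ : Matrix.SpecialLinearGroup (Fin 2) ℤ,
      (ξ * γ.1).det = p := by
    intro ξ hξ γ
    rw [Matrix.det_mul, heckeSet_det hξ, γ.2, mul_one]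
  constructor
  · intro ξ hξ γ
    exact hecke_decomp p hp (ξ * γ.1) (hdetmul ξ hξ γ)
  · intro γ
    classical
    set F : Matrix (Fin 2) (Fin 2) ℤ → Matrix (Fin 2) (Fin 2) ℤ := fun ξ =>
      if h : ξ ∈ heckeSet p then
        (hecke_decomp p hp (ξ * γ.1) (hdetmul ξ h γ)).exists.choose.1
      else ξ with hF
    have hFspec : ∀ ξ (h : ξ ∈ heckeSet p),
        F ξ ∈ heckeSet p ∧ ∃ γ' : Matrix.SpecialLinearGroup (Fin 2) ℤ,
          ξ * γ.1 = γ'.1 * F ξ := by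
      intro ξ h
      have hspec := (hecke_decomp p hp (ξ * γ.1) (hdetmul ξ h γ)).exists.choose_spec
      rw [hF]
      simp only [dif_pos h]
      exact ⟨hspec.1, _, hspec.2⟩
    have hinj : Set.InjOn F (heckeSet p) := by
      intro ξ₁ h1 ξ₂ h2 hFeq
      obtain ⟨_, γ₁, hγ₁⟩ := hFspec ξ₁ h1
      obtain ⟨_, γ₂, hγ₂⟩ := hFspec ξ₂ h2
      rw [hFeq] at hγ₁
      have hc : (γ₂⁻¹).1 * (γ₂.1 * F ξ₂) = F ξ₂ := by
        rw [← mul_assoc, ← Matrix.SpecialLinearGroup.coe_mul, inv_mul_cancel,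
          Matrix.SpecialLinearGroup.coe_one, one_mul]
      have hthis : ξ₁ * γ.1 = (γ₁ * γ₂⁻¹).1 * (ξ₂ * γ.1) := by
        calc ξ₁ * γ.1 = γ₁.1 * F ξ₂ := hγ₁
          _ = γ₁.1 * ((γ₂⁻¹).1 * (γ₂.1 * F ξ₂)) := by rw [hc]
          _ = (γ₁ * γ₂⁻¹).1 * (γ₂.1 * F ξ₂) := by
              rw [Matrix.SpecialLinearGroup.coe_mul, mul_assoc]
          _ = (γ₁ * γ₂⁻¹).1 * (ξ₂ * γ.1) := by rw [hγ₂]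
      have hγinv : γ.1 * (γ⁻¹).1 = 1 := by
        rw [← Matrix.SpecialLinearGroup.coe_mul, mul_inv_cancel,
          Matrix.SpecialLinearGroup.coe_one]
      have hcan : (γ₁ * γ₂⁻¹).1 * ξ₂ = ξ₁ := by
        calc (γ₁ * γ₂⁻¹).1 * ξ₂ = (γ₁ * γ₂⁻¹).1 * (ξ₂ * (γ.1 * (γ⁻¹).1)) := by
              rw [hγinv, mul_one]
          _ = ((γ₁ * γ₂⁻¹).1 * (ξ₂ * γ.1)) * (γ⁻¹).1 := by
              rw [mul_assoc, mul_assoc]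
          _ = (ξ₁ * γ.1) * (γ⁻¹).1 := by rw [← hthis]
          _ = ξ₁ * (γ.1 * (γ⁻¹).1) := by rw [mul_assoc]
          _ = ξ₁ := by rw [hγinv, mul_one]
      exact (heckeSet_orbit_eq hp h2 h1 _ hcan).1.symm
    have hmaps : Set.MapsTo F (heckeSet p) (heckeSet p) := fun ξ h => (hFspec ξ h).1
    have hsurj : Set.SurjOn F (heckeSet p) (heckeSet p) := by
      intro ζ hζ
      have hdet' : (ζ * (γ⁻¹).1).det = p := by
        rw [Matrix.det_mul, heckeSet_det hζ, (γ⁻¹).2, mul_one]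
      obtain ⟨⟨ξ, δ⟩, ⟨hξmem, hξeq⟩, _⟩ := hecke_decomp p hp (ζ * (γ⁻¹).1) hdet'
      refine ⟨ξ, hξmem, ?_⟩
      obtain ⟨hFmem, γ', hγ'⟩ := hFspec ξ hξmem
      have hγinv : (γ⁻¹).1 * γ.1 = 1 := by
        rw [← Matrix.SpecialLinearGroup.coe_mul, inv_mul_cancel,
          Matrix.SpecialLinearGroup.coe_one]
      have hξγ : δ.1 * (ξ * γ.1) = ζ := by
        calc δ.1 * (ξ * γ.1) = (δ.1 * ξ) * γ.1 := by rw [mul_assoc]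
          _ = (ζ * (γ⁻¹).1) * γ.1 := by rw [← hξeq]
          _ = ζ * ((γ⁻¹).1 * γ.1) := by rw [mul_assoc]
          _ = ζ := by rw [hγinv, mul_one]
      have hfin : (δ * γ').1 * F ξ = ζ := by
        rw [Matrix.SpecialLinearGroup.coe_mul, mul_assoc, ← hγ', hξγ]
      exact ((heckeSet_orbit_eq hp hFmem hζ _ hfin).1).symm ▸ rfl
    exact ⟨F, ⟨hmaps, hinj, hsurj⟩, fun ξ h => (hFspec ξ h).2⟩
end
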